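/- arXiv:1507.07094 — 4 statements merged into one kernel-verified Lean document; each statement's English description precedes it below -/
import Mathlib

section
/- If |x| is majorized by |x̃| for nonzero vectors x, x̃ ∈ ℝ^p (where |x| denotes the vector of absolute values), then for any q ∈ (0,1) ∪ (1,∞), s_q(x) ≥ s_q(x̃); i.e., s_q is Schur concave on the nonnegative orthant minus the origin. -/
open Finset

/-- Sum of the `k` largest entries of `u`, as a supremum over size-`k` subsets. -/
noncomputable def topSum {p : ℕ} (u : Fin p → ℝ) (k : ℕ) : ℝ :=
  sSup {s : ℝ | ∃ S : Finset (Fin p), S.card = k ∧ s = ∑ i ∈ S, u i}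

/-- `u` is majorized by `v`. -/
def Majorizes {p : ℕ} (u v : Fin p → ℝ) : Prop :=
  (∀ k : ℕ, topSum u k ≤ topSum v k) ∧ (∑ i, u i = ∑ i, v i)

/-!
Karamata's inequality: if `u ≺ v` with nonnegative entries and `φ` is convex on `[0, ∞)`, then
`∑ φ (u i) ≤ ∑ φ (v i)`. Sorting both vectors decreasingly turns `topSum` into partial sums; with
`c i` the right derivative of `φ` at the `i`-th largest entry of `u`, the tangent-line inequality
gives `∑ φ (v i) - ∑ φ (u i) ≥ ∑ c i (v i - u i)`, and summation by parts shows the right side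
is nonnegative because `c` is decreasing and the partial sums of `v - u` are nonnegative and
sum to zero overall. Applied to `t ^ q` (convex for `q > 1`, concave for `q < 1`), this compares
`‖x‖_q` with `‖x̃‖_q`, while `‖x‖_1 = ‖x̃‖_1`; the sign of `q / (1 - q)` then gives the claim.
-/

theorem sum_range_mul_le_sum_range_mul_of_antitoneOn {R : Type*} [CommRing R] [LinearOrder R]
    [IsOrderedRing R] {n : ℕ} {a b c : ℕ → R} (hc : AntitoneOn c (range n))
    (hab : ∀ k ≤ n, ∑ i ∈ range k, a i ≤ ∑ i ∈ range k, b i)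
    (htot : ∑ i ∈ range n, a i = ∑ i ∈ range n, b i) :
    ∑ i ∈ range n, c i * a i ≤ ∑ i ∈ range n, c i * b i := by
  have hparts := sum_range_by_parts c (fun i => b i - a i) n
  have htot' : ∑ i ∈ range n, (b i - a i) = 0 := by rw [sum_sub_distrib, htot, sub_self]
  simp only [smul_eq_mul, htot', mul_zero, zero_sub] at hparts
  have hdiff : 0 ≤ ∑ i ∈ range n, c i * (b i - a i) := by
    rw [hparts, neg_nonneg]
    refine sum_nonpos fun i hi => mul_nonpos_of_nonpos_of_nonneg ?_ ?_
    · have hi : i + 1 < n := by have := mem_range.1 hi; omega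
      exact sub_nonpos.2 (hc (mem_range.2 (by omega)) (mem_range.2 hi) i.le_succ)
    · rw [sum_sub_distrib, sub_nonneg]
      exact hab _ (by have := mem_range.1 hi; omega)
  simpa only [mul_sub, sum_sub_distrib, sub_nonneg] using hdiff

theorem ConvexOn.add_rightDeriv_mul_sub_le {S : Set ℝ} {f : ℝ → ℝ} (hf : ConvexOn ℝ S f)
    {x y : ℝ} (hx : x ∈ interior S) (hy : y ∈ S) :
    f x + derivWithin f (Set.Ioi x) x * (y - x) ≤ f y := by
  rcases lt_trichotomy x y with hxy | rfl | hxy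
  · have h := hf.rightDeriv_le_slope_of_mem_interior hx hy hxy
    rw [slope_def_field, le_div_iff₀ (sub_pos.2 hxy)] at h
    linarith
  · simp
  · have h := (hf.slope_le_leftDeriv_of_mem_interior hy hx hxy).trans
      (hf.leftDeriv_le_rightDeriv_of_mem_interior hx)
    rw [slope_def_field, div_le_iff₀ (sub_pos.2 hxy)] at h
    linarith

theorem ConvexOn.sum_range_le_of_majorization_of_mem_interior {S : Set ℝ} {φ : ℝ → ℝ}
    (hφ : ConvexOn ℝ S φ) {n : ℕ} {a b : ℕ → ℝ} (ha : AntitoneOn a (range n))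
    (haS : ∀ i < n, a i ∈ interior S) (hbS : ∀ i < n, b i ∈ S)
    (hab : ∀ k ≤ n, ∑ i ∈ range k, a i ≤ ∑ i ∈ range k, b i)
    (htot : ∑ i ∈ range n, a i = ∑ i ∈ range n, b i) :
    ∑ i ∈ range n, φ (a i) ≤ ∑ i ∈ range n, φ (b i) := by
  set c := fun i => derivWithin φ (Set.Ioi (a i)) (a i)
  have hc : AntitoneOn c (range n) := fun i hi j hj hij =>
    hφ.monotoneOn_rightDeriv (haS j (mem_range.1 hj)) (haS i (mem_range.1 hi)) (ha hi hj hij)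
  have habel := sum_range_mul_le_sum_range_mul_of_antitoneOn hc hab htot
  calc ∑ i ∈ range n, φ (a i)
      ≤ ∑ i ∈ range n, (φ (a i) + c i * (b i - a i)) := by
        simp only [sum_add_distrib, mul_sub, sum_sub_distrib]
        linarith
    _ ≤ ∑ i ∈ range n, φ (b i) := sum_le_sum fun i hi =>
        hφ.add_rightDeriv_mul_sub_le (haS i (mem_range.1 hi)) (hbS i (mem_range.1 hi))

theorem ConvexOn.sum_range_le_of_majorization_of_nonneg {φ : ℝ → ℝ}
    (hφ : ConvexOn ℝ (Set.Ici 0) φ) {n : ℕ} {a b : ℕ → ℝ} (ha : AntitoneOn a (range n))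
    (ha₀ : ∀ i < n, 0 ≤ a i) (hb₀ : ∀ i < n, 0 ≤ b i)
    (hab : ∀ k ≤ n, ∑ i ∈ range k, a i ≤ ∑ i ∈ range k, b i)
    (htot : ∑ i ∈ range n, a i = ∑ i ∈ range n, b i) :
    ∑ i ∈ range n, φ (a i) ≤ ∑ i ∈ range n, φ (b i) := by
  induction n with
  | zero => simp
  | succ n ih =>
    by_cases hpos : 0 < a n
    · refine hφ.sum_range_le_of_majorization_of_mem_interior ha (fun i hi => ?_)
        (fun i hi => hb₀ i hi) hab htot
      rw [interior_Ici]
      exact hpos.trans_le (ha (mem_range.2 hi) (mem_range.2 n.lt_succ_self) (by omega))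
    -- `φ` need not have a finite right derivative at `0` (think of `-√t`), so a vanishing last
    -- entry of `a` is peeled off instead; the corresponding entry of `b` vanishes as well.
    have han : a n = 0 := le_antisymm (not_lt.1 hpos) (ha₀ n n.lt_succ_self)
    have hbn : b n = 0 := by
      have := hab n n.le_succ
      rw [sum_range_succ, sum_range_succ, han] at htot
      exact le_antisymm (by linarith) (hb₀ n n.lt_succ_self)
    rw [sum_range_succ, sum_range_succ, han, hbn] at htot
    rw [sum_range_succ, sum_range_succ, han, hbn, add_le_add_iff_right]
    exact ih (ha.mono (by simp)) (fun i hi => ha₀ i (by omega)) (fun i hi => hb₀ i (by omega))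
      (fun k hk => hab k (by omega)) (by linarith)

theorem AntitoneOn.sum_le_sum_range_card {M : Type*} [AddCommMonoid M] [PartialOrder M]
    [IsOrderedAddMonoid M] {v : ℕ → M} {n : ℕ} (hv : AntitoneOn v (range n)) {S : Finset ℕ}
    (hS : S ⊆ range n) : ∑ i ∈ S, v i ≤ ∑ i ∈ range #S, v i := by
  induction S using Finset.induction_on_max with
  | empty => simp
  | insert m S hlt ih =>
    have hm : m ∉ S := fun h => lt_irrefl m (hlt m h)
    have hmn : m < n := mem_range.1 (hS (mem_insert_self m S))
    have hcard : #S ≤ m := by simpa using card_le_card (fun i hi => mem_range.2 (hlt i hi))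
    rw [sum_insert hm, card_insert_of_notMem hm, sum_range_succ, add_comm]
    exact add_le_add (ih ((subset_insert m S).trans hS))
      (hv (mem_range.2 (by omega)) (mem_range.2 hmn) hcard)

section DecreasingRearrangement

variable {p : ℕ} (u : Fin p → ℝ)

noncomputable def antitonePerm : Equiv.Perm (Fin p) := Fin.revPerm.trans (Tuple.sort u)

theorem antitone_comp_antitonePerm : Antitone (u ∘ antitonePerm u) :=
  (Tuple.monotone_sort u).comp_antitone Fin.rev_anti

noncomputable def decreasingRearrangement (n : ℕ) : ℝ :=
  if h : n < p then u (antitonePerm u ⟨n, h⟩) else 0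

theorem decreasingRearrangement_coe (i : Fin p) :
    decreasingRearrangement u i = u (antitonePerm u i) := by
  simp [decreasingRearrangement]

theorem antitoneOn_decreasingRearrangement :
    AntitoneOn (decreasingRearrangement u) (range p) := fun i hi j hj hij => by
  have hi' := mem_range.1 hi
  have hj' := mem_range.1 hj
  simpa [decreasingRearrangement, hi', hj'] using
    antitone_comp_antitonePerm u (show (⟨i, hi'⟩ : Fin p) ≤ ⟨j, hj'⟩ from hij)

theorem decreasingRearrangement_nonneg {u : Fin p → ℝ} (hu : ∀ i, 0 ≤ u i) (n : ℕ) :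
    0 ≤ decreasingRearrangement u n := by
  unfold decreasingRearrangement
  split_ifs
  exacts [hu _, le_rfl]

theorem sum_range_decreasingRearrangement (φ : ℝ → ℝ) :
    ∑ i ∈ range p, φ (decreasingRearrangement u i) = ∑ i, φ (u i) := by
  rw [← Fin.sum_univ_eq_sum_range (fun i => φ (decreasingRearrangement u i))]
  simp only [decreasingRearrangement_coe]
  exact Equiv.sum_comp (antitonePerm u) (fun i => φ (u i))

theorem sum_le_sum_range_decreasingRearrangement (S : Finset (Fin p)) :
    ∑ i ∈ S, u i ≤ ∑ i ∈ range #S, decreasingRearrangement u i := by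
  let e : Fin p ↪ ℕ := (antitonePerm u).symm.toEmbedding.trans Fin.valEmbedding
  have hS : S.map e ⊆ range p := fun i hi => by
    obtain ⟨j, -, rfl⟩ := mem_map.1 hi
    exact mem_range.2 (Fin.is_lt _)
  have := (antitoneOn_decreasingRearrangement u).sum_le_sum_range_card hS
  simpa [e, decreasingRearrangement_coe] using this

theorem topSum_eq_sum_range_decreasingRearrangement {k : ℕ} (hk : k ≤ p) :
    topSum u k = ∑ i ∈ range k, decreasingRearrangement u i := by
  refine IsGreatest.csSup_eq ⟨⟨univ.map ((Fin.castLEEmb hk).trans (antitonePerm u).toEmbedding),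
    by simp, ?_⟩, ?_⟩
  · rw [sum_map, ← Fin.sum_univ_eq_sum_range]
    simp [← decreasingRearrangement_coe]
  · rintro s ⟨S, rfl, rfl⟩
    exact sum_le_sum_range_decreasingRearrangement u S

end DecreasingRearrangement

theorem Majorizes.sum_le_sum_of_convexOn {p : ℕ} {u v : Fin p → ℝ} (h : Majorizes u v)
    (hu : ∀ i, 0 ≤ u i) (hv : ∀ i, 0 ≤ v i) {φ : ℝ → ℝ} (hφ : ConvexOn ℝ (Set.Ici 0) φ) :
    ∑ i, φ (u i) ≤ ∑ i, φ (v i) := by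
  have htot : ∑ i ∈ range p, decreasingRearrangement u i =
      ∑ i ∈ range p, decreasingRearrangement v i :=
    (sum_range_decreasingRearrangement u id).trans
      (h.2.trans (sum_range_decreasingRearrangement v id).symm)
  have := hφ.sum_range_le_of_majorization_of_nonneg (antitoneOn_decreasingRearrangement u)
    (fun i _ => decreasingRearrangement_nonneg hu i)
    (fun i _ => decreasingRearrangement_nonneg hv i)
    (fun k hk => by
      rw [← topSum_eq_sum_range_decreasingRearrangement u hk,
        ← topSum_eq_sum_range_decreasingRearrangement v hk]
      exact h.1 k)
    htot
  rwa [sum_range_decreasingRearrangement, sum_range_decreasingRearrangement] at this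

theorem Majorizes.sum_le_sum_of_concaveOn {p : ℕ} {u v : Fin p → ℝ} (h : Majorizes u v)
    (hu : ∀ i, 0 ≤ u i) (hv : ∀ i, 0 ≤ v i) {φ : ℝ → ℝ} (hφ : ConcaveOn ℝ (Set.Ici 0) φ) :
    ∑ i, φ (v i) ≤ ∑ i, φ (u i) := by
  simpa using h.sum_le_sum_of_convexOn hu hv hφ.neg

theorem sq_schur_concave_general (p : ℕ) (x xt : Fin p → ℝ) (hx : x ≠ 0)
    (hmaj : Majorizes (fun i => |x i|) (fun i => |xt i|))
    (q : ℝ) (hq0 : 0 < q) (hq1 : q ≠ 1) :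
    ((∑ i, |xt i| ^ q) ^ (1/q) / (∑ i, |xt i|)) ^ (q / (1 - q)) ≤
    ((∑ i, |x i| ^ q) ^ (1/q) / (∑ i, |x i|)) ^ (q / (1 - q)) := by
  have habs : ∀ y : Fin p → ℝ, ∀ i, 0 ≤ |y i| := fun y i => abs_nonneg _
  obtain ⟨i₀, hi₀⟩ := Function.ne_iff.mp hx
  have hx₁ : 0 < ∑ i, |x i| := sum_pos' (fun i _ => habs x i) ⟨i₀, mem_univ _, abs_pos.2 hi₀⟩
  have hxq : 0 < ∑ i, |x i| ^ q := sum_pos' (fun i _ => by positivity)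
    ⟨i₀, mem_univ _, Real.rpow_pos_of_pos (abs_pos.2 hi₀) q⟩
  rw [← hmaj.2]
  rcases hq1.lt_or_gt with hq | hq
  · have hpow : ∑ i, |xt i| ^ q ≤ ∑ i, |x i| ^ q :=
      hmaj.sum_le_sum_of_concaveOn (habs x) (habs xt) (Real.concaveOn_rpow hq0.le hq.le)
    have hexp : 0 ≤ q / (1 - q) := div_nonneg hq0.le (by linarith)
    gcongr
  · have hpow : ∑ i, |x i| ^ q ≤ ∑ i, |xt i| ^ q :=
      hmaj.sum_le_sum_of_convexOn (habs x) (habs xt) (convexOn_rpow hq.le)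
    refine Real.rpow_le_rpow_of_nonpos (by positivity) ?_
      (div_nonpos_of_nonneg_of_nonpos hq0.le (by linarith))
    gcongr

theorem sq_schur_concave (p : ℕ) (x xt : Fin p → ℝ) (hx : x ≠ 0) (hxt : xt ≠ 0)
    (hmaj : Majorizes (fun i => |x i|) (fun i => |xt i|))
    (q : ℝ) (hq0 : 0 < q) (hq1 : q ≠ 1) :
    ((∑ i, |xt i| ^ q) ^ (1/q) / (∑ i, |xt i|)) ^ (q / (1 - q)) ≤
    ((∑ i, |x i| ^ q) ^ (1/q) / (∑ i, |x i|)) ^ (q / (1 - q)) :=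
  sq_schur_concave_general p x xt hx hmaj q hq0 hq1
end

section
/- Let A ∈ ℝ^{n×p} with n < p, and let x° ∈ ℝ^p be arbitrary. Then there exists a nonzero vector x̃ ∈ ℝ^p with A x̃ = A x° and ‖x̃‖_1² / ‖x̃‖_2² ≥ (1/(πe)) · (1 − n/p)² · p. -/
/-!
Project a random sign vector `ε ∈ {±1}^p` orthogonally onto `K = ker A`. Since distinct signs are
orthogonal on average, `‖P ε‖²` has mean `dim K ≥ p - n`, so some `y = P ε ∈ K` has
`‖y‖₂² ≥ p - n`; as `‖y‖₂² = ⟪ε, y⟫ ≤ ‖y‖₁`, also `s₂(y) ≥ ‖y‖₂² ≥ p - n`. Now `s₂` is scale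
invariant and continuous away from `0`, so `s₂(x° + t y) = s₂(x°/t + y) → s₂(y)` as `t → ∞`, and
`p - n` exceeds the required bound because `π e > 1`.
-/

open Finset Module Filter Topology RealInnerProductSpace

section Signs

variable {ι : Type*} [Fintype ι]

theorem sum_units_mul_units [DecidableEq ι] (i j : ι) :
    ∑ ε : ι → ℤˣ, ((ε i : ℤ) : ℝ) * (ε j : ℤ) =
      if i = j then (Fintype.card (ι → ℤˣ) : ℝ) else 0 := by
  split_ifs with hij
  · subst hij
    simp [← Int.cast_mul, ← Units.val_mul, Int.units_mul_self]
  · -- flipping the sign of `ε i` is a bijection that negates the summand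
    have hflip := Equiv.sum_comp (Equiv.mulLeft (Pi.mulSingle i (-1) : ι → ℤˣ))
      fun ε : ι → ℤˣ => ((ε i : ℤ) : ℝ) * (ε j : ℤ)
    simp only [Equiv.coe_mulLeft, Pi.mul_apply, Pi.mulSingle_eq_same,
      Pi.mulSingle_eq_of_ne' hij, one_mul, Units.val_neg, Int.cast_neg, neg_mul,
      sum_neg_distrib] at hflip
    linarith

theorem sum_sq_sum_units_mul [DecidableEq ι] (u : ι → ℝ) :
    ∑ ε : ι → ℤˣ, (∑ i, ((ε i : ℤ) : ℝ) * u i) ^ 2 =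
      Fintype.card (ι → ℤˣ) * ∑ i, u i ^ 2 := by
  calc ∑ ε : ι → ℤˣ, (∑ i, ((ε i : ℤ) : ℝ) * u i) ^ 2
      = ∑ i, ∑ j, u i * u j * ∑ ε : ι → ℤˣ, ((ε i : ℤ) : ℝ) * (ε j : ℤ) := by
        simp_rw [sq, sum_mul_sum, mul_sum]
        rw [sum_comm]
        refine sum_congr rfl fun i _ => ?_
        rw [sum_comm]
        exact sum_congr rfl fun j _ => sum_congr rfl fun ε _ => by ring
    _ = Fintype.card (ι → ℤˣ) * ∑ i, u i ^ 2 := by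
        simp [sum_units_mul_units, mul_sum, sq, mul_comm]

theorem sum_units_mul_le_sum_abs (ε : ι → ℤˣ) (x : ι → ℝ) :
    ∑ i, ((ε i : ℤ) : ℝ) * x i ≤ ∑ i, |x i| := by
  refine sum_le_sum fun i _ => ?_
  rcases Int.units_eq_one_or (ε i) with h | h <;> simp [h, le_abs_self, neg_le_abs]

end Signs

section NumericalSparsity

variable {ι : Type*} [Fintype ι]

noncomputable def numericalSparsity (x : ι → ℝ) : ℝ :=
  (∑ i, |x i|) ^ 2 / ∑ i, x i ^ 2

theorem numericalSparsity_smul {c : ℝ} (hc : c ≠ 0) (x : ι → ℝ) :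
    numericalSparsity (c • x) = numericalSparsity x := by
  simp only [numericalSparsity, Pi.smul_apply, smul_eq_mul, abs_mul, mul_pow, ← mul_sum]
  rw [sq_abs, mul_div_mul_left _ _ (pow_ne_zero 2 hc)]

theorem sum_sq_le_numericalSparsity {x : ι → ℝ} (hx : ∑ i, x i ^ 2 ≤ ∑ i, |x i|) :
    ∑ i, x i ^ 2 ≤ numericalSparsity x := by
  rcases (sum_nonneg fun i _ => sq_nonneg (x i)).eq_or_lt with h | h
  · rw [← h]
    exact div_nonneg (sq_nonneg _) h.le
  · rw [numericalSparsity, le_div_iff₀ h, ← sq]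
    exact pow_le_pow_left₀ h.le hx 2

theorem continuousAt_numericalSparsity {x : ι → ℝ} (hx : x ≠ 0) :
    ContinuousAt numericalSparsity x := by
  have hden : ∑ i, x i ^ 2 ≠ 0 := by
    contrapose! hx
    ext i
    simpa using (sum_eq_zero_iff_of_nonneg fun i _ => sq_nonneg (x i)).1 hx i (mem_univ i)
  unfold numericalSparsity
  fun_prop (disch := exact hden)

theorem eventually_numericalSparsity_add_smul_gt {c : ℝ} {y : ι → ℝ} (hy : y ≠ 0)
    (hc : c < numericalSparsity y) (x : ι → ℝ) :
    ∀ᶠ t : ℝ in atTop, x + t • y ≠ 0 ∧ c < numericalSparsity (x + t • y) := by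
  have hlim : Tendsto (fun t : ℝ => t⁻¹ • x + y) atTop (𝓝 y) := by
    simpa using ((tendsto_inv_atTop_zero (𝕜 := ℝ)).smul_const x).add_const y
  filter_upwards [hlim.eventually_ne hy,
    hlim.eventually ((continuousAt_numericalSparsity hy).eventually (lt_mem_nhds hc)),
    eventually_gt_atTop 0] with t hne hlt ht
  have hrescale : x + t • y = t • (t⁻¹ • x + y) := by
    rw [smul_add, smul_inv_smul₀ ht.ne']
  rw [hrescale, numericalSparsity_smul ht.ne']
  exact ⟨smul_ne_zero ht.ne' hne, hlt⟩

theorem Submodule.exists_mem_finrank_le_numericalSparsity [DecidableEq ι]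
    (K : Submodule ℝ (EuclideanSpace ℝ ι)) :
    ∃ y ∈ K, (finrank ℝ K : ℝ) ≤ numericalSparsity y.ofLp := by
  let b := stdOrthonormalBasis ℝ K
  let sign (ε : ι → ℤˣ) : EuclideanSpace ℝ ι := WithLp.toLp 2 fun i => ((ε i : ℤ) : ℝ)
  have hproj (v : EuclideanSpace ℝ ι) :
      ‖K.orthogonalProjectionOnto v‖ ^ 2 = ∑ j, ⟪(b j : EuclideanSpace ℝ ι), v⟫ ^ 2 := by
    simp only [← b.sum_sq_inner_right, inner_orthogonalProjectionOnto_eq_of_mem_left]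
  have hsign (j) : ∑ ε, ⟪(b j : EuclideanSpace ℝ ι), sign ε⟫ ^ 2 = Fintype.card (ι → ℤˣ) := by
    calc ∑ ε, ⟪(b j : EuclideanSpace ℝ ι), sign ε⟫ ^ 2
        = ∑ ε : ι → ℤˣ, (∑ i, ((ε i : ℤ) : ℝ) * (b j : EuclideanSpace ℝ ι) i) ^ 2 := by
          simp [PiLp.inner_apply, sign]
      _ = Fintype.card (ι → ℤˣ) := by
          rw [sum_sq_sum_units_mul, ← EuclideanSpace.real_norm_sq_eq, Submodule.norm_coe,
            b.orthonormal.1 j, one_pow, mul_one]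
  have hmean : ∑ _ε : ι → ℤˣ, (finrank ℝ K : ℝ) ≤
      ∑ ε, ‖K.orthogonalProjectionOnto (sign ε)‖ ^ 2 := by
    simp_rw [hproj]
    rw [sum_comm]
    simp [hsign, mul_comm]
  obtain ⟨ε, -, hε⟩ := exists_le_of_sum_le univ_nonempty hmean
  set y := K.orthogonalProjectionOnto (sign ε)
  have hnorm : ‖y‖ ^ 2 = ∑ i, (y : EuclideanSpace ℝ ι) i ^ 2 := EuclideanSpace.real_norm_sq_eq _
  refine ⟨y, y.2, (hnorm ▸ hε).trans (sum_sq_le_numericalSparsity ?_)⟩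
  calc ∑ i, (y : EuclideanSpace ℝ ι) i ^ 2 = ⟪K.starProjection (sign ε), sign ε⟫ := by
        rw [← hnorm, ← re_inner_starProjection_eq_normSq]; rfl
    _ = ∑ i, ((ε i : ℤ) : ℝ) * (y : EuclideanSpace ℝ ι) i := by
        simp [PiLp.inner_apply, sign, y]
    _ ≤ ∑ i, |(y : EuclideanSpace ℝ ι) i| := sum_units_mul_le_sum_abs ε _

end NumericalSparsity

theorem Matrix.card_le_finrank_ker_toEuclideanLin_add_card {𝕜 m n : Type*} [RCLike 𝕜]
    [Fintype m] [Fintype n] [DecidableEq n] (A : Matrix m n 𝕜) :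
    Fintype.card n ≤ finrank 𝕜 (LinearMap.ker A.toEuclideanLin) + Fintype.card m := by
  have hrange := Submodule.finrank_le (LinearMap.range A.toEuclideanLin)
  have := LinearMap.finrank_range_add_finrank_ker A.toEuclideanLin
  simp only [finrank_euclideanSpace] at hrange this
  omega

theorem one_div_pi_mul_exp_one_mul_one_sub_div_sq_mul_lt {a b : ℝ} (ha : 0 ≤ a) (hab : a < b) :
    1 / (Real.pi * Real.exp 1) * (1 - a / b) ^ 2 * b < b - a := by
  have hb : 0 < b := ha.trans_lt hab
  have hpe : 1 < Real.pi * Real.exp 1 := by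
    nlinarith [Real.pi_gt_three, Real.add_one_le_exp 1]
  have hsq : (1 - a / b) ^ 2 * b ≤ b - a := by
    rw [one_sub_div hb.ne', div_pow, div_mul_eq_mul_div, div_le_iff₀ (by positivity), sq]
    nlinarith [mul_nonneg (mul_nonneg hb.le (sub_nonneg.2 hab.le)) ha]
  calc 1 / (Real.pi * Real.exp 1) * (1 - a / b) ^ 2 * b
      = (1 - a / b) ^ 2 * b / (Real.pi * Real.exp 1) := by ring
    _ ≤ (b - a) / (Real.pi * Real.exp 1) := by gcongr
    _ < b - a := div_lt_self (by linarith) hpe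

theorem exists_dense_in_fiber_s2 (n p : ℕ) (hnp : n < p) (A : Matrix (Fin n) (Fin p) ℝ)
    (x0 : Fin p → ℝ) :
    ∃ xt : Fin p → ℝ, xt ≠ 0 ∧ A.mulVec xt = A.mulVec x0 ∧
      (∑ i, |xt i|) ^ 2 / (∑ i, (xt i) ^ 2) ≥
        (1 / (Real.pi * Real.exp 1)) * (1 - (n : ℝ) / p) ^ 2 * p := by
  obtain ⟨y, hyK, hy⟩ := (LinearMap.ker A.toEuclideanLin).exists_mem_finrank_le_numericalSparsity
  have hdim := A.card_le_finrank_ker_toEuclideanLin_add_card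
  simp only [Fintype.card_fin] at hdim
  have hgap : (p : ℝ) - n ≤ numericalSparsity y.ofLp := by
    refine le_trans ?_ hy
    rw [sub_le_iff_le_add]
    exact_mod_cast hdim
  have hbound := (one_div_pi_mul_exp_one_mul_one_sub_div_sq_mul_lt (Nat.cast_nonneg n)
    (Nat.cast_lt.2 hnp)).trans_le hgap
  have hy0 : y.ofLp ≠ 0 := by
    rintro h
    have : (p : ℝ) - n ≤ 0 := by simpa [h, numericalSparsity] using hgap
    linarith [(Nat.cast_lt (α := ℝ)).2 hnp]
  obtain ⟨t, hne, hlt⟩ := (eventually_numericalSparsity_add_smul_gt hy0 hbound x0).exists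
  rw [LinearMap.mem_ker, ← WithLp.ofLp_eq_zero, Matrix.ofLp_toLpLin, Matrix.toLin'_apply] at hyK
  refine ⟨x0 + t • y.ofLp, hne, ?_, hlt.le⟩
  rw [Matrix.mulVec_add, Matrix.mulVec_smul, hyK, smul_zero, add_zero]
end

section
/- Let A ∈ ℝ^{n×p} with n < p, and let x° ∈ ℝ^p be arbitrary. Then there exists a nonzero vector x̄ ∈ ℝ^p with A x̄ = A x° and ‖x̄‖_1 / ‖x̄‖_∞ ≥ √(2/(πe)) · (p − n) / (1 + √(16 log(2p))). -/
/-!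
The factor in front of `p - n` is below `1`, so any sparsity bound strictly below `p - n`
suffices. Let `K = ker A`, of dimension `d ≥ p - n`. An extreme point `v` of the
compact convex set `K ∩ [-1, 1]^p` has at least `d` coordinates of modulus `1`: a nonzero
`w ∈ K` vanishing on all of them could be added to and subtracted from `v` in small amounts
without leaving the set. Hence `‖v‖₁ / ‖v‖_∞ ≥ d`. Numerical sparsity is scale invariant and
continuous away from `0`, so `x° + t v` inherits a sparsity above any `B < d` once `t` is large.
-/

open Finset Filter Topology Module

noncomputable def numSparsity {ι : Type*} [Fintype ι] (x : ι → ℝ) : ℝ :=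
  (∑ i, |x i|) / ⨆ i, |x i|

section NumSparsity

variable {ι : Type*} [Fintype ι]

lemma iSup_abs_eq_norm (x : ι → ℝ) : ⨆ i, |x i| = ‖x‖ :=
  le_antisymm (Real.iSup_le (fun i => norm_le_pi_norm x i) (norm_nonneg x))
    ((pi_norm_le_iff_of_nonneg (Real.iSup_nonneg fun i => abs_nonneg (x i))).2
      fun i => (Real.norm_eq_abs _).trans_le
        (le_ciSup (f := fun i => |x i|) (Set.finite_range _).bddAbove i))

lemma numSparsity_eq_div_norm (x : ι → ℝ) : numSparsity x = (∑ i, |x i|) / ‖x‖ := by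
  rw [numSparsity, iSup_abs_eq_norm]

lemma numSparsity_nonneg (x : ι → ℝ) : 0 ≤ numSparsity x := by
  rw [numSparsity_eq_div_norm]
  positivity

@[simp]
lemma numSparsity_zero : numSparsity (0 : ι → ℝ) = 0 := by
  simp [numSparsity]

lemma numSparsity_smul {c : ℝ} (hc : c ≠ 0) (x : ι → ℝ) : numSparsity (c • x) = numSparsity x := by
  simp only [numSparsity_eq_div_norm, norm_smul, Pi.smul_apply, smul_eq_mul, abs_mul,
    ← mul_sum, Real.norm_eq_abs]
  exact mul_div_mul_left _ _ (abs_ne_zero.2 hc)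

lemma continuousAt_numSparsity {x : ι → ℝ} (hx : x ≠ 0) : ContinuousAt numSparsity x := by
  rw [show (numSparsity : (ι → ℝ) → ℝ) = fun y => (∑ i, |y i|) / ‖y‖ from
    funext numSparsity_eq_div_norm]
  exact ((continuous_finsetSum _ fun i _ => by fun_prop).continuousAt).div
    continuous_norm.continuousAt (norm_ne_zero_iff.2 hx)

lemma sum_abs_le_numSparsity {x : ι → ℝ} (hx : ‖x‖ ≤ 1) : ∑ i, |x i| ≤ numSparsity x := by
  rcases eq_or_ne x 0 with rfl | hx₀
  · simp
  rw [numSparsity_eq_div_norm]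
  exact le_div_self (by positivity) (norm_pos_iff.2 hx₀) hx

lemma exists_lt_numSparsity_add_smul (x₀ : ι → ℝ) {v : ι → ℝ} {B : ℝ}
    (hB : B < numSparsity v) : ∃ t : ℝ, B < numSparsity (x₀ + t • v) := by
  rcases eq_or_ne v 0 with rfl | hv
  · exact ⟨0, by simpa using (hB.trans_eq numSparsity_zero).trans_le (numSparsity_nonneg x₀)⟩
  have hlim : Tendsto (fun s : ℝ => numSparsity (s • x₀ + v)) (𝓝 0) (𝓝 (numSparsity v)) := by
    have := ((continuousAt_numSparsity hv).comp_of_eq (x := (0 : ℝ))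
      (f := fun s : ℝ => s • x₀ + v) (by fun_prop) (by simp)).tendsto
    simpa only [Function.comp_def, zero_smul, zero_add] using this
  obtain ⟨s, hs, hBs⟩ := (hlim.eventually_const_lt hB).exists_gt
  refine ⟨s⁻¹, ?_⟩
  rwa [← numSparsity_smul hs.ne', smul_add, smul_smul, mul_inv_cancel₀ hs.ne', one_smul]

end NumSparsity

section ExtremePoint

variable {ι : Type*} [Fintype ι] {K : Submodule ℝ (ι → ℝ)}

lemma eq_zero_of_mem_extremePoints_of_eq_zero_on_abs_eq_one {v w : ι → ℝ}
    (hv : v ∈ Set.extremePoints ℝ ((K : Set (ι → ℝ)) ∩ Metric.closedBall 0 1))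
    (hw : w ∈ K) (hw₀ : ∀ i, |v i| = 1 → w i = 0) : w = 0 := by
  obtain ⟨⟨hvK, hv₁⟩, hext⟩ := mem_extremePoints.1 hv
  have hnear : ∀ᶠ δ in 𝓝 (0 : ℝ), ∀ i, |v i| + |δ| * |w i| ≤ 1 := by
    refine eventually_all.2 fun i => ?_
    by_cases hi : |v i| = 1
    · exact Eventually.of_forall fun δ => by simp [hw₀ i hi, hi]
    have hlt : |v i| < 1 :=
      lt_of_le_of_ne ((norm_le_pi_norm v i).trans (mem_closedBall_zero_iff.1 hv₁)) hi
    have hcont : Continuous fun δ : ℝ => |v i| + |δ| * |w i| := by fun_prop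
    exact ((hcont.tendsto' 0 _ (by simp)).eventually_lt_const hlt).mono fun δ => le_of_lt
  obtain ⟨δ, hδ, hδw⟩ := hnear.exists_gt
  have hmem : ∀ σ : ℝ, |σ| = |δ| → v + σ • w ∈ (K : Set (ι → ℝ)) ∩ Metric.closedBall 0 1 := by
    refine fun σ hσ => ⟨K.add_mem hvK (K.smul_mem σ hw),
      mem_closedBall_zero_iff.2 ((pi_norm_le_iff_of_nonneg zero_le_one).2 fun i => ?_)⟩
    calc ‖v i + σ * w i‖ ≤ |v i| + |σ| * |w i| := by
          simpa [abs_mul] using abs_add_le (v i) (σ * w i)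
      _ ≤ 1 := by rw [hσ]; exact hδw i
  have hseg : v ∈ openSegment ℝ (v + δ • w) (v + (-δ) • w) :=
    ⟨1 / 2, 1 / 2, by norm_num, by norm_num, by norm_num, by module⟩
  have hvw := (hext _ (hmem δ rfl) _ (hmem (-δ) (abs_neg δ)) hseg).1
  simpa [hδ.ne'] using hvw

lemma finrank_le_card_abs_eq_one_of_mem_extremePoints {v : ι → ℝ}
    (hv : v ∈ Set.extremePoints ℝ ((K : Set (ι → ℝ)) ∩ Metric.closedBall 0 1)) :
    finrank ℝ K ≤ #{i | |v i| = 1} := by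
  set I : Finset ι := {i | |v i| = 1}
  let restrict : K →ₗ[ℝ] (I → ℝ) := (LinearMap.funLeft ℝ ℝ ((↑) : I → ι)).comp K.subtype
  have hinj : Function.Injective restrict := by
    refine (injective_iff_map_eq_zero restrict).2 fun w hw => Subtype.ext ?_
    refine eq_zero_of_mem_extremePoints_of_eq_zero_on_abs_eq_one hv w.2 fun i hi => ?_
    simpa [restrict] using congrFun hw ⟨i, mem_filter.2 ⟨mem_univ i, hi⟩⟩
  simpa using LinearMap.finrank_le_finrank_of_injective hinj

lemma exists_mem_finrank_le_numSparsity (K : Submodule ℝ (ι → ℝ)) :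
    ∃ v ∈ K, (finrank ℝ K : ℝ) ≤ numSparsity v := by
  have hcpt : IsCompact ((K : Set (ι → ℝ)) ∩ Metric.closedBall 0 1) :=
    (isCompact_closedBall 0 1).inter_left K.closed_of_finiteDimensional
  obtain ⟨v, hv⟩ := hcpt.extremePoints_nonempty
    ⟨0, K.zero_mem, Metric.mem_closedBall_self zero_le_one⟩
  obtain ⟨hvK, hv₁⟩ := extremePoints_subset hv
  refine ⟨v, hvK, ?_⟩
  calc (finrank ℝ K : ℝ) ≤ #{i | |v i| = 1} := by
        exact_mod_cast finrank_le_card_abs_eq_one_of_mem_extremePoints hv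
    _ = ∑ i ∈ {i | |v i| = 1}, |v i| := by
        rw [sum_congr rfl fun i hi => (mem_filter.1 hi).2]
        simp
    _ ≤ ∑ i, |v i| := sum_le_sum_of_subset_of_nonneg (subset_univ _) fun i _ _ => abs_nonneg _
    _ ≤ numSparsity v := sum_abs_le_numSparsity (mem_closedBall_zero_iff.1 hv₁)

end ExtremePoint

lemma Matrix.card_le_card_add_finrank_ker_mulVecLin {R m n : Type*} [Field R] [Fintype m]
    [Fintype n] (A : Matrix m n R) :
    Fintype.card n ≤ Fintype.card m + finrank R (LinearMap.ker A.mulVecLin) := by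
  have hsum := A.mulVecLin.finrank_range_add_finrank_ker
  have hrange := Submodule.finrank_le (LinearMap.range A.mulVecLin)
  simp only [finrank_fintype_fun_eq_card] at hsum hrange
  omega

lemma sqrt_two_div_pi_mul_exp_one_lt_one : √(2 / (Real.pi * Real.exp 1)) < 1 := by
  rw [Real.sqrt_lt' one_pos, one_pow, div_lt_one (by positivity)]
  nlinarith [Real.pi_gt_three, Real.add_one_le_exp 1]

theorem exists_dense_in_fiber_sInf (n p : ℕ) (hnp : n < p) (A : Matrix (Fin n) (Fin p) ℝ)
    (x0 : Fin p → ℝ) :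
    ∃ xb : Fin p → ℝ, xb ≠ 0 ∧ A.mulVec xb = A.mulVec x0 ∧
      (∑ i, |xb i|) / (⨆ i, |xb i|) ≥
        Real.sqrt (2 / (Real.pi * Real.exp 1)) * ((p : ℝ) - n) /
          (1 + Real.sqrt (16 * Real.log (2 * p))) := by
  set B := √(2 / (Real.pi * Real.exp 1)) * ((p : ℝ) - n) / (1 + √(16 * Real.log (2 * p)))
  have hpn : (0 : ℝ) < p - n := sub_pos.2 (by exact_mod_cast hnp)
  have hB₀ : 0 ≤ B := by positivity
  have hBlt : B < p - n :=
    calc B ≤ √(2 / (Real.pi * Real.exp 1)) * ((p : ℝ) - n) :=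
          div_le_self (by positivity) (le_add_of_nonneg_right (Real.sqrt_nonneg _))
      _ < p - n := mul_lt_of_lt_one_left hpn sqrt_two_div_pi_mul_exp_one_lt_one
  have hdim : (p : ℝ) - n ≤ finrank ℝ (LinearMap.ker A.mulVecLin) := by
    have := A.card_le_card_add_finrank_ker_mulVecLin
    simp only [Fintype.card_fin] at this
    rw [sub_le_iff_le_add']
    exact_mod_cast this
  obtain ⟨v, hvK, hv⟩ := exists_mem_finrank_le_numSparsity (LinearMap.ker A.mulVecLin)
  obtain ⟨t, ht⟩ := exists_lt_numSparsity_add_smul x0 (hBlt.trans_le (hdim.trans hv))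
  refine ⟨x0 + t • v, fun h => ?_, ?_, ht.le⟩
  · rw [h, numSparsity_zero] at ht
    linarith
  · rw [Matrix.mulVec_add, Matrix.mulVec_smul, show A.mulVec v = 0 from hvK, smul_zero, add_zero]
end

section
/- Let f : [0,∞) → ℝ be four-times differentiable with f(0) ≥ 0, f′(0) ≥ 0, and f⁗(u) > 0 for all u > 0. Then the function u ↦ f(u)/u² is strictly convex on (0,∞). -/
/-!
Put `g = u²f'' - 4uf' + 6f` and `p = u²f''' - 2uf'' + 2f'`. Then `(f/u²)'' = g/u⁴`, `g' = p` and
`p' = u²f''''`. So `p` increases strictly from `p 0 = 2f'(0) ≥ 0`, hence is positive on `(0,∞)`;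
then `g` increases strictly from `g 0 = 6f(0) ≥ 0`, hence is positive there, and so is `(f/u²)''`.
-/

open Set

lemma DifferentiableOn.hasDerivAt_derivWithin_Ici {g : ℝ → ℝ} {a x : ℝ}
    (hg : DifferentiableOn ℝ g (Ici a)) (hx : a < x) :
    HasDerivAt g (derivWithin g (Ici a) x) x :=
  (hg x hx.le).hasDerivWithinAt.hasDerivAt (Ici_mem_nhds hx)

lemma pos_of_hasDerivAt_pos_of_nonneg_left {g g' : ℝ → ℝ} {a x : ℝ}
    (hc : ContinuousOn g (Ici a)) (hd : ∀ y > a, HasDerivAt g (g' y) y)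
    (hpos : ∀ y > a, 0 < g' y) (ha : 0 ≤ g a) (hx : a < x) : 0 < g x := by
  have hmono : StrictMonoOn g (Ici a) :=
    strictMonoOn_of_deriv_pos (convex_Ici a) hc fun y hy => by
      rw [interior_Ici] at hy
      rw [(hd y hy).deriv]
      exact hpos y hy
  exact ha.trans_lt (hmono self_mem_Ici hx.le hx)

lemma strictConvexOn_of_hasDerivAt2_pos {s : Set ℝ} (hs : Convex ℝ s) (hso : IsOpen s)
    {f f' f'' : ℝ → ℝ} (hf : ∀ x ∈ s, HasDerivAt f (f' x) x)
    (hf' : ∀ x ∈ s, HasDerivAt f' (f'' x) x) (hpos : ∀ x ∈ s, 0 < f'' x) :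
    StrictConvexOn ℝ s f := by
  have hmono : StrictMonoOn f' s :=
    strictMonoOn_of_hasDerivWithinAt_pos hs
      (fun x hx => (hf' x hx).continuousAt.continuousWithinAt)
      (fun x hx => (hf' x (interior_subset hx)).hasDerivWithinAt)
      (fun x hx => hpos x (interior_subset hx))
  refine StrictMonoOn.strictConvexOn_of_deriv hs
    (fun x hx => (hf x hx).continuousAt.continuousWithinAt) ?_
  rw [hso.interior_eq]
  exact hmono.congr fun x hx => ((hf x hx).deriv).symm

section DivSq

variable {f f₁ f₂ f₃ : ℝ → ℝ} {x : ℝ}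

lemma hasDerivAt_div_sq (hf : HasDerivAt f (f₁ x) x) (hx : x ≠ 0) :
    HasDerivAt (fun u => f u / u ^ 2) ((x * f₁ x - 2 * f x) / x ^ 3) x := by
  refine (hf.div (hasDerivAt_pow 2 x) (pow_ne_zero 2 hx)).congr_deriv ?_
  field_simp
  ring

lemma hasDerivAt_deriv_div_sq (hf : HasDerivAt f (f₁ x) x) (hf₁ : HasDerivAt f₁ (f₂ x) x)
    (hx : x ≠ 0) :
    HasDerivAt (fun u => (u * f₁ u - 2 * f u) / u ^ 3)
      ((x ^ 2 * f₂ x - 4 * x * f₁ x + 6 * f x) / x ^ 4) x := by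
  have hnum := ((hasDerivAt_id' x).mul hf₁).sub (hf.const_mul 2)
  refine (hnum.div (hasDerivAt_pow 3 x) (pow_ne_zero 3 hx)).congr_deriv ?_
  simp only [Pi.sub_apply, Pi.mul_apply]
  field_simp
  ring

lemma hasDerivAt_sq_mul_sub_mul_add_mul (a b : ℝ) (hf : HasDerivAt f (f₁ x) x)
    (hf₁ : HasDerivAt f₁ (f₂ x) x) (hf₂ : HasDerivAt f₂ (f₃ x) x) :
    HasDerivAt (fun u => u ^ 2 * f₂ u - a * u * f₁ u + b * f u)
      (x ^ 2 * f₃ x + (2 - a) * x * f₂ x + (b - a) * f₁ x) x := by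
  have h := (((hasDerivAt_pow 2 x).mul hf₂).sub
    (((hasDerivAt_id' x).const_mul a).mul hf₁)).add (hf.const_mul b)
  refine h.congr_deriv ?_
  ring

lemma sq_mul_sub_mul_add_mul_pos (a b : ℝ) (hc : ContinuousOn f (Ici 0))
    (hc₁ : ContinuousOn f₁ (Ici 0)) (hc₂ : ContinuousOn f₂ (Ici 0))
    (hf : ∀ x > 0, HasDerivAt f (f₁ x) x) (hf₁ : ∀ x > 0, HasDerivAt f₁ (f₂ x) x)
    (hf₂ : ∀ x > 0, HasDerivAt f₂ (f₃ x) x) (h0 : 0 ≤ b * f 0)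
    (hpos : ∀ x > 0, 0 < x ^ 2 * f₃ x + (2 - a) * x * f₂ x + (b - a) * f₁ x) :
    ∀ x > 0, 0 < x ^ 2 * f₂ x - a * x * f₁ x + b * f x :=
  fun x hx => pos_of_hasDerivAt_pos_of_nonneg_left
    (g := fun u => u ^ 2 * f₂ u - a * u * f₁ u + b * f u) (by fun_prop)
    (fun y hy => hasDerivAt_sq_mul_sub_mul_add_mul a b (hf y hy) (hf₁ y hy) (hf₂ y hy))
    hpos (by simpa using h0) hx

lemma strictConvexOn_div_sq (hf : ∀ x > 0, HasDerivAt f (f₁ x) x)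
    (hf₁ : ∀ x > 0, HasDerivAt f₁ (f₂ x) x)
    (hpos : ∀ x > 0, 0 < x ^ 2 * f₂ x - 4 * x * f₁ x + 6 * f x) :
    StrictConvexOn ℝ (Ioi 0) (fun u => f u / u ^ 2) :=
  strictConvexOn_of_hasDerivAt2_pos (convex_Ioi 0) isOpen_Ioi
    (fun x hx => hasDerivAt_div_sq (hf x hx) (ne_of_gt hx))
    (fun x hx => hasDerivAt_deriv_div_sq (hf x hx) (hf₁ x hx) (ne_of_gt hx))
    (fun x hx => div_pos (hpos x hx) (pow_pos hx 4))

end DivSq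

theorem div_sq_strictConvex (f : ℝ → ℝ)
    (hf : DifferentiableOn ℝ f (Ici 0))
    (hf1 : DifferentiableOn ℝ (derivWithin f (Ici 0)) (Ici 0))
    (hf2 : DifferentiableOn ℝ (derivWithin (derivWithin f (Ici 0)) (Ici 0)) (Ici 0))
    (hf3 : DifferentiableOn ℝ
      (derivWithin (derivWithin (derivWithin f (Ici 0)) (Ici 0)) (Ici 0)) (Ici 0))
    (h0 : 0 ≤ f 0)
    (h0' : 0 ≤ derivWithin f (Ici 0) 0)
    (h4 : ∀ u > 0,
      0 < derivWithin (derivWithin (derivWithin (derivWithin f (Ici 0)) (Ici 0)) (Ici 0))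
        (Ici 0) u) :
    StrictConvexOn ℝ (Ioi 0) (fun u => f u / u ^ 2) := by
  have hd₀ := fun x (hx : 0 < x) => hf.hasDerivAt_derivWithin_Ici hx
  have hd₁ := fun x (hx : 0 < x) => hf1.hasDerivAt_derivWithin_Ici hx
  have hd₂ := fun x (hx : 0 < x) => hf2.hasDerivAt_derivWithin_Ici hx
  have hd₃ := fun x (hx : 0 < x) => hf3.hasDerivAt_derivWithin_Ici hx
  have hp := sq_mul_sub_mul_add_mul_pos 2 2 hf1.continuousOn hf2.continuousOn
    hf3.continuousOn hd₁ hd₂ hd₃ (by linarith)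
    (fun x hx => by nlinarith [h4 x hx, pow_pos hx 2])
  have hg := sq_mul_sub_mul_add_mul_pos 4 6 hf.continuousOn hf1.continuousOn
    hf2.continuousOn hd₀ hd₁ hd₂ (by linarith) (fun x hx => by linarith [hp x hx])
  exact strictConvexOn_div_sq hd₀ hd₁ hg
end
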